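/- Let 𝒟 be a dyadic grid, F a fixed cube, ℱ a collection of dyadic subcubes of F, and τ ≥ 1. Define the τ-shifted corona 𝒞_F^{τ-shift} = [𝒞_F ∖ 𝒩^τ(F)] ∪ ⋃_{F' ∈ 𝔠_ℱ(F)} [𝒩^τ(F') ∖ 𝒩^τ(F)], where 𝒩^τ(G) = {J ∈ 𝒟 : J ⊂ G, ℓ(J) > 2^{-τ}ℓ(G)} and 𝒞_F is the corona of F. Then the shifted coronas have bounded overlap: for each J ∈ 𝒟, Σ_{F ∈ ℱ} 1_{𝒞_F^{τ-shift}}(J) ≤ τ. -/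

import Mathlib

noncomputable section

/-- The standard dyadic cube of scale `2^k` at position `m`. -/
def DSet (n : ℕ) (J : ℤ × (Fin n → ℤ)) : Set (Fin n → ℝ) :=
  {x | ∀ i, (J.2 i : ℝ) * 2 ^ J.1 ≤ x i ∧ x i < ((J.2 i : ℝ) + 1) * 2 ^ J.1}

/-- Containment of dyadic cubes. -/
def dle (n : ℕ) (J I : ℤ × (Fin n → ℤ)) : Prop := DSet n J ⊆ DSet n I

/-- Strict containment of dyadic cubes. -/
def dlt (n : ℕ) (J I : ℤ × (Fin n → ℤ)) : Prop := DSet n J ⊂ DSet n I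

/-- The corona `𝒞_F` of `F` relative to the stopping collection `ℱ`:
dyadic cubes `I ⊆ F` not contained in any `F' ∈ ℱ` with `F' ⊊ F`. -/
def corona (n : ℕ) (ℱ : Set (ℤ × (Fin n → ℤ))) (F : ℤ × (Fin n → ℤ)) :
    Set (ℤ × (Fin n → ℤ)) :=
  {I | dle n I F ∧ ∀ F' ∈ ℱ, dlt n F' F → ¬ dle n I F'}

/-- `𝒩^τ(G) = {J : J ⊆ G and ℓ(J) > 2^{-τ} ℓ(G)}`. -/
def nbhd (n : ℕ) (τ : ℕ) (G : ℤ × (Fin n → ℤ)) : Set (ℤ × (Fin n → ℤ)) :=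
  {J | dle n J G ∧ G.1 - (τ : ℤ) < J.1}

/-- The `ℱ`-children of `F`: maximal members of `ℱ` strictly contained in `F`. -/
def fchildren (n : ℕ) (ℱ : Set (ℤ × (Fin n → ℤ))) (F : ℤ × (Fin n → ℤ)) :
    Set (ℤ × (Fin n → ℤ)) :=
  {F' | F' ∈ ℱ ∧ dlt n F' F ∧
    ∀ F'' ∈ ℱ, dlt n F'' F → dle n F' F'' → F'' = F'}

/-- The `τ`-shifted corona
`𝒞_F^{τ-shift} = [𝒞_F ∖ 𝒩^τ(F)] ∪ ⋃_{F' ∈ 𝔠_ℱ(F)} [𝒩^τ(F') ∖ 𝒩^τ(F)]`. -/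
def shiftedCorona (n : ℕ) (ℱ : Set (ℤ × (Fin n → ℤ))) (τ : ℕ)
    (F : ℤ × (Fin n → ℤ)) : Set (ℤ × (Fin n → ℤ)) :=
  (corona n ℱ F \ nbhd n τ F) ∪
    ⋃ F' ∈ fchildren n ℱ F, (nbhd n τ F' \ nbhd n τ F)

/-!
Every `F` with `J ∈ 𝒞_F^{τ-shift}` contains `J` and has `ℓ(J) ≤ 2^{-τ} ℓ(F)`. If for one such `F`
the cube `J` lies in `𝒩^τ(G)` with `G` an `ℱ`-child of `F`, then `G ⊊ F'` for every other such
`F'`, so `J` lies in none of their coronas: each of them has an `ℱ`-child `G_F ⊇ J` with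
`ℓ(J) ≤ ℓ(G_F) < 2^τ ℓ(J)`. Since a cube is the `ℱ`-child of at most one member of `ℱ`, and the
cube `G_F` is determined by its side length, `F ↦ ℓ(G_F)` is injective with at most `τ` values.
Otherwise `J` lies in all of their coronas, and coronas are disjoint.
-/

variable {n : ℕ}

section Dyadic

theorem mem_dSet_iff {J : ℤ × (Fin n → ℤ)} {x : Fin n → ℝ} :
    x ∈ DSet n J ↔ ∀ i, ⌊x i / 2 ^ J.1⌋ = J.2 i := by
  have h2 : (0 : ℝ) < 2 ^ J.1 := by positivity
  simp only [DSet, Set.mem_ofPred_eq, Int.floor_eq_iff, le_div_iff₀ h2, div_lt_iff₀ h2]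

theorem corner_add_mem_dSet (J : ℤ × (Fin n → ℤ)) {t : ℝ} (ht₀ : 0 ≤ t) (ht : t < 2 ^ J.1) :
    (fun i => (J.2 i : ℝ) * 2 ^ J.1 + t) ∈ DSet n J :=
  fun _ => ⟨by linarith, by linarith⟩

theorem dSet_nonempty (J : ℤ × (Fin n → ℤ)) : (DSet n J).Nonempty :=
  ⟨_, corner_add_mem_dSet J le_rfl (by positivity)⟩

theorem floor_div_two_zpow_of_le (x : ℝ) {k l : ℤ} (h : k ≤ l) :
    ⌊x / 2 ^ l⌋ = ⌊x / 2 ^ k⌋ / 2 ^ (l - k).toNat := by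
  have hpow : (2 : ℝ) ^ l = 2 ^ k * 2 ^ (l - k).toNat := by
    rw [← zpow_natCast, ← zpow_add₀ two_ne_zero, Int.toNat_of_nonneg (by omega)]
    ring_nf
  rw [hpow, ← div_div]
  exact_mod_cast Int.floor_div_natCast (x / 2 ^ k) (2 ^ (l - k).toNat)

theorem dle_of_mem_of_mem {J I : ℤ × (Fin n → ℤ)} {x : Fin n → ℝ} (hxJ : x ∈ DSet n J)
    (hxI : x ∈ DSet n I) (h : J.1 ≤ I.1) : dle n J I := by
  intro y hy
  rw [mem_dSet_iff] at hxJ hxI hy ⊢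
  intro i
  rw [floor_div_two_zpow_of_le _ h, hy i, ← hxJ i, ← floor_div_two_zpow_of_le _ h, hxI i]

theorem dle_of_dle_of_dle {J I K : ℤ × (Fin n → ℤ)} (hI : dle n J I) (hK : dle n J K)
    (h : I.1 ≤ K.1) : dle n I K :=
  have ⟨_, hx⟩ := dSet_nonempty J
  dle_of_mem_of_mem (hI hx) (hK hx) h

theorem scale_le_of_dle (hn : 0 < n) {J I : ℤ × (Fin n → ℤ)} (h : dle n J I) : J.1 ≤ I.1 := by
  by_contra! hlt
  have hsmall : (2 : ℝ) ^ I.1 < 2 ^ J.1 := zpow_lt_zpow_right₀ one_lt_two hlt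
  have hx := mem_dSet_iff.1 (h (corner_add_mem_dSet J le_rfl (by positivity))) ⟨0, hn⟩
  have hy := mem_dSet_iff.1 (h (corner_add_mem_dSet J (by positivity) hsmall)) ⟨0, hn⟩
  rw [add_zero] at hx
  rw [add_div, div_self (by positivity), Int.floor_add_one, hx] at hy
  omega

theorem eq_of_dle_of_scale_eq {J I : ℤ × (Fin n → ℤ)} (h : dle n J I) (hk : J.1 = I.1) :
    J = I := by
  have hx := corner_add_mem_dSet J le_rfl (by positivity)
  have hxJ := mem_dSet_iff.1 hx
  have hxI := mem_dSet_iff.1 (h hx)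
  exact Prod.ext hk (funext fun i => by rw [← hxJ i, ← hxI i, hk])

theorem dle_antisymm (hn : 0 < n) {J I : ℤ × (Fin n → ℤ)} (h₁ : dle n J I) (h₂ : dle n I J) :
    J = I :=
  eq_of_dle_of_scale_eq h₁ (le_antisymm (scale_le_of_dle hn h₁) (scale_le_of_dle hn h₂))

theorem dlt_of_dle_of_ne (hn : 0 < n) {J I : ℤ × (Fin n → ℤ)} (h : dle n J I) (hne : J ≠ I) :
    dlt n J I :=
  Set.ssubset_iff_subset_ne.2 ⟨h, fun e => hne (dle_antisymm hn h e.symm.subset)⟩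

theorem eq_of_dle_of_dle_of_scale_eq {J I K : ℤ × (Fin n → ℤ)} (hI : dle n J I) (hK : dle n J K)
    (h : I.1 = K.1) : I = K :=
  eq_of_dle_of_scale_eq (dle_of_dle_of_dle hI hK h.le) h

end Dyadic

section Corona

variable {ℱ : Set (ℤ × (Fin n → ℤ))} {τ : ℕ} {J F G : ℤ × (Fin n → ℤ)}

theorem eq_of_mem_corona_of_mem_corona (hn : 0 < n) {F₁ F₂ : ℤ × (Fin n → ℤ)} (h₁ : F₁ ∈ ℱ)
    (h₂ : F₂ ∈ ℱ) (hJ₁ : J ∈ corona n ℱ F₁) (hJ₂ : J ∈ corona n ℱ F₂) : F₁ = F₂ := by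
  wlog hle : F₁.1 ≤ F₂.1 generalizing F₁ F₂ with H
  · exact (H h₂ h₁ hJ₂ hJ₁ (le_of_not_ge hle)).symm
  by_contra hne
  exact hJ₂.2 F₁ h₁ (dlt_of_dle_of_ne hn (dle_of_dle_of_dle hJ₁.1 hJ₂.1 hle) hne) hJ₁.1

theorem eq_of_mem_fchildren_of_mem_fchildren (hn : 0 < n) {F₁ F₂ : ℤ × (Fin n → ℤ)}
    (h₁ : F₁ ∈ ℱ) (h₂ : F₂ ∈ ℱ) (hG₁ : G ∈ fchildren n ℱ F₁) (hG₂ : G ∈ fchildren n ℱ F₂) :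
    F₁ = F₂ := by
  wlog hle : F₁.1 ≤ F₂.1 generalizing F₁ F₂ with H
  · exact (H h₂ h₁ hG₂ hG₁ (le_of_not_ge hle)).symm
  by_contra hne
  have hlt := dlt_of_dle_of_ne hn (dle_of_dle_of_dle hG₁.2.1.subset hG₂.2.1.subset hle) hne
  have hGG : dlt n G G := hG₂.2.2 F₁ h₁ hlt hG₁.2.1.subset ▸ hG₁.2.1
  exact ssubset_irrefl _ hGG

theorem dle_of_mem_shiftedCorona (h : J ∈ shiftedCorona n ℱ τ F) : dle n J F := by
  rcases h with ⟨hJ, -⟩ | h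
  · exact hJ.1
  · obtain ⟨G, hG, hJG, -⟩ := Set.mem_iUnion₂.1 h
    exact hJG.1.trans hG.2.1.subset

theorem scale_add_le_of_mem_shiftedCorona (h : J ∈ shiftedCorona n ℱ τ F) : J.1 + τ ≤ F.1 := by
  have hJF : J ∉ nbhd n τ F := by
    rcases h with ⟨-, hJ⟩ | h
    · exact hJ
    · obtain ⟨G, -, -, hJ⟩ := Set.mem_iUnion₂.1 h
      exact hJ
  by_contra! hlt
  exact hJF ⟨dle_of_mem_shiftedCorona h, by omega⟩

theorem mem_corona_of_mem_shiftedCorona (h : J ∈ shiftedCorona n ℱ τ F)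
    (hJ : ∀ G ∈ fchildren n ℱ F, J ∉ nbhd n τ G) : J ∈ corona n ℱ F := by
  rcases h with ⟨hc, -⟩ | h
  · exact hc
  · obtain ⟨G, hG, hJG, -⟩ := Set.mem_iUnion₂.1 h
    exact absurd hJG (hJ G hG)

theorem exists_mem_fchildren_of_mem_shiftedCorona (hn : 0 < n) (hG : G ∈ ℱ)
    (hJG : J ∈ nbhd n τ G) (hJF : J ∈ shiftedCorona n ℱ τ F) :
    ∃ G' ∈ fchildren n ℱ F, J ∈ nbhd n τ G' := by
  by_contra! hno
  have hc := mem_corona_of_mem_shiftedCorona hJF hno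
  have hscale : G.1 < F.1 := by
    have := hJG.2
    have := scale_add_le_of_mem_shiftedCorona hJF
    omega
  have hGF : G ≠ F := fun h => hscale.ne (congrArg Prod.fst h)
  exact hc.2 G hG (dlt_of_dle_of_ne hn (dle_of_dle_of_dle hJG.1 hc.1 hscale.le) hGF) hJG.1

theorem scale_mem_Ico_of_mem_nbhd (hn : 0 < n) (h : J ∈ nbhd n τ G) :
    G.1 ∈ Finset.Ico J.1 (J.1 + τ) :=
  Finset.mem_Ico.2 ⟨scale_le_of_dle hn h.1, by have := h.2; omega⟩

end Corona

/-- The `τ`-shifted coronas have overlap bounded by `τ`: for each dyadic cube `J`,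
at most `τ` cubes `F ∈ ℱ` satisfy `J ∈ 𝒞_F^{τ-shift}`. -/
theorem shifted_corona_bounded_overlap (n τ : ℕ) (hn : 0 < n) (hτ : 1 ≤ τ)
    (ℱ : Set (ℤ × (Fin n → ℤ))) (J : ℤ × (Fin n → ℤ))
    (S : Finset (ℤ × (Fin n → ℤ)))
    (hS : ∀ F ∈ S, F ∈ ℱ ∧ J ∈ shiftedCorona n ℱ τ F) :
    S.card ≤ τ := by
  by_cases hchild : ∃ F₀ ∈ S, ∃ G₀ ∈ fchildren n ℱ F₀, J ∈ nbhd n τ G₀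
  · obtain ⟨_, _, G₀, hG₀, hJG₀⟩ := hchild
    choose! G hG hJG using fun F hF =>
      exists_mem_fchildren_of_mem_shiftedCorona hn hG₀.1 hJG₀ (hS F hF).2
    calc S.card ≤ (Finset.Ico J.1 (J.1 + τ)).card :=
          Finset.card_le_card_of_injOn (fun F => (G F).1)
            (fun F hF => scale_mem_Ico_of_mem_nbhd hn (hJG F hF))
            fun F₁ h₁ F₂ h₂ hscale => eq_of_mem_fchildren_of_mem_fchildren hn (hS F₁ h₁).1
              (hS F₂ h₂).1 (hG F₁ h₁)
              (eq_of_dle_of_dle_of_scale_eq (hJG F₁ h₁).1 (hJG F₂ h₂).1 hscale ▸ hG F₂ h₂)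
      _ = τ := by simp
  · push Not at hchild
    have hcorona : ∀ F ∈ S, J ∈ corona n ℱ F := fun F hF =>
      mem_corona_of_mem_shiftedCorona (hS F hF).2 (hchild F hF)
    have hcard : S.card ≤ 1 := Finset.card_le_one.2 fun F₁ h₁ F₂ h₂ =>
      eq_of_mem_corona_of_mem_corona hn (hS F₁ h₁).1 (hS F₂ h₂).1 (hcorona F₁ h₁) (hcorona F₂ h₂)
    omega
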